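/- Let V₁, V₂: ℝ → [0,∞) be Orlicz functions with V₁(x)/V₂(x) → ∞ as |x| → ∞ and ∫_ℝ V₁(x) e^{αV₂(x)} dx < ∞ for all α ∈ (-∞,0). For R ∈ (0,∞) let α(R) ∈ (-∞,0) be the unique solution of m_{V₂}(μ_{V₂,α(R)}) = R. Then there exists R̄ ∈ (0,∞) with m_{V₁}(μ_{V₂,α(R̄)}) = 1 such that for all 0 < R ≤ R̄ one has m_{V₁}(μ_{V₂,α(R)}) ≤ 1. -/

import Mathlib

/-!
Write `m(W, α)` for the mean of `W` under `μ_{V₂,α}`. Symmetrizing over `μ ⊗ μ` (Chebyshev's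
integral inequality), `α ↦ m(W, α)` is nondecreasing on `(-∞, 0)` whenever `W` increases with
`V₂`, as `V₁` does, and strictly increasing for `W = V₂`; so `α(R)` inverts `α ↦ m(V₂, α)`.
The map `α ↦ m(V₁, α)` is continuous, at most `1` as `α → -∞` (the measure concentrates at `0`)
and at least `1` for some `α` close to `0` (the measure spreads out and `V₁` is coercive), so it
takes the value `1` at some `c`. With `R̄ = m(V₂, c)` we get `α(R̄) = c`, and `R ≤ R̄` forces
`α(R) ≤ c`, whence `m(V₁, α(R)) ≤ m(V₁, c) = 1`.
-/

open MeasureTheory Real Filter Topology ENNReal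

noncomputable section

/-- An Orlicz function: convex, symmetric, vanishing only at `0`, nonnegative. -/
def IsOrlicz (V : ℝ → ℝ) : Prop :=
  ConvexOn ℝ Set.univ V ∧ (∀ x, V (-x) = V x) ∧ V 0 = 0 ∧ (∀ x, x ≠ 0 → 0 < V x) ∧
    (∀ x, 0 ≤ V x)

open Set

/-- `m_W(μ_{V,α})`: the mean of `W` under the probability measure with density proportional
to `exp (α * V)` with respect to `μ`. -/
def gibbsMean {X : Type*} [MeasurableSpace X] (μ : Measure X) (W V : X → ℝ) (α : ℝ) : ℝ :=
  (∫ x, W x * exp (α * V x) ∂μ) / ∫ x, exp (α * V x) ∂μ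

section Correlation

variable {X : Type*}

/-- The symmetrized integrand of Chebyshev's integral inequality. -/
def chebyshevKernel (W f g : X → ℝ) (p : X × X) : ℝ :=
  (W p.1 - W p.2) * (f p.1 * g p.2 - g p.1 * f p.2)

theorem chebyshevKernel_exp_mul_nonneg {W V : X → ℝ} (hWV : Monovary W V) {α α' : ℝ}
    (hα : α ≤ α') (p : X × X) :
    0 ≤ chebyshevKernel W (fun x => exp (α' * V x)) (fun x => exp (α * V x)) p := by
  simp only [chebyshevKernel, ← exp_add]
  rcases lt_trichotomy (V p.1) (V p.2) with h | h | h
  · refine mul_nonneg_of_nonpos_of_nonpos (sub_nonpos.2 (hWV h)) (sub_nonpos.2 ?_)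
    exact exp_le_exp.2 (by nlinarith)
  · simp [h, add_comm]
  · refine mul_nonneg (sub_nonneg.2 (hWV h)) (sub_nonneg.2 ?_)
    exact exp_le_exp.2 (by nlinarith)

theorem chebyshevKernel_exp_mul_pos {V : X → ℝ} {α α' : ℝ} (hα : α < α') {p : X × X}
    (h : V p.2 < V p.1) :
    0 < chebyshevKernel V (fun x => exp (α' * V x)) (fun x => exp (α * V x)) p := by
  simp only [chebyshevKernel, ← exp_add]
  exact mul_pos (sub_pos.2 h) (sub_pos.2 (exp_lt_exp.2 (by nlinarith)))

theorem chebyshevKernel_eq (W f g : X → ℝ) :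
    chebyshevKernel W f g = fun p => W p.1 * f p.1 * g p.2 - W p.1 * g p.1 * f p.2
      - f p.1 * (W p.2 * g p.2) + g p.1 * (W p.2 * f p.2) := by
  ext p; simp only [chebyshevKernel]; ring

variable [MeasurableSpace X] {μ : Measure X}

theorem integral_exp_mul_pos [NeZero μ] {V : X → ℝ} {α : ℝ}
    (h : Integrable (fun x => exp (α * V x)) μ) : 0 < ∫ x, exp (α * V x) ∂μ := by
  rw [integral_pos_iff_support_of_nonneg (fun x => (exp_pos _).le) h]
  simp [Function.support, exp_ne_zero, NeZero.ne μ]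

variable {W f g : X → ℝ} (hf : Integrable f μ) (hg : Integrable g μ)
  (hWf : Integrable (fun x => W x * f x) μ) (hWg : Integrable (fun x => W x * g x) μ)
include hf hg hWf hWg

theorem integrable_chebyshevKernel : Integrable (chebyshevKernel W f g) (μ.prod μ) := by
  rw [chebyshevKernel_eq]
  exact (((hWf.mul_prod hg).sub (hWg.mul_prod hf)).sub (hf.mul_prod hWg)).add (hg.mul_prod hWf)

theorem integral_chebyshevKernel [SFinite μ] :
    ∫ p, chebyshevKernel W f g p ∂μ.prod μ =
      2 * ((∫ x, W x * f x ∂μ) * (∫ x, g x ∂μ) - (∫ x, W x * g x ∂μ) * ∫ x, f x ∂μ) := by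
  have h₁ := hWf.mul_prod hg
  have h₂ := hWg.mul_prod hf
  have h₃ := hf.mul_prod hWg
  rw [chebyshevKernel_eq, integral_add, integral_sub, integral_sub,
    integral_prod_mul (fun x => W x * f x) g, integral_prod_mul (fun x => W x * g x) f,
    integral_prod_mul f (fun x => W x * g x), integral_prod_mul g (fun x => W x * f x)]
  · ring
  exacts [h₁, h₂, h₁.sub h₂, h₃, (h₁.sub h₂).sub h₃, hg.mul_prod hWf]

omit hf hg hWf hWg

theorem continuousOn_integral_mul_exp_mul {W V : X → ℝ} (hW : AEStronglyMeasurable W μ)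
    (hV : Measurable V) (hV0 : ∀ x, 0 ≤ V x)
    (hint : ∀ β < 0, Integrable (fun x => W x * exp (β * V x)) μ) :
    ContinuousOn (fun α => ∫ x, W x * exp (α * V x) ∂μ) (Iio 0) := by
  intro α₀ hα₀
  have hα₀ : α₀ < α₀ / 2 := by linarith [mem_Iio.1 hα₀]
  refine (continuousAt_of_dominated (bound := fun x => ‖W x * exp (α₀ / 2 * V x)‖) ?_ ?_
    (hint _ (by linarith)).norm ?_).continuousWithinAt
  · exact Eventually.of_forall fun α => hW.mul (hV.const_mul α).exp.aestronglyMeasurable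
  · filter_upwards [Iio_mem_nhds hα₀] with α hα
    refine Eventually.of_forall fun x => ?_
    simp only [norm_mul, norm_of_nonneg (exp_pos _).le]
    gcongr
    exacts [hV0 x, le_of_lt hα]
  · exact Eventually.of_forall fun x => by fun_prop

theorem continuousOn_gibbsMean [NeZero μ] {W V : X → ℝ} (hW : AEStronglyMeasurable W μ)
    (hV : Measurable V) (hV0 : ∀ x, 0 ≤ V x)
    (hZ : ∀ β < 0, Integrable (fun x => exp (β * V x)) μ)
    (hint : ∀ β < 0, Integrable (fun x => W x * exp (β * V x)) μ) :
    ContinuousOn (gibbsMean μ W V) (Iio 0) := by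
  have hZc : ContinuousOn (fun α => ∫ x, exp (α * V x) ∂μ) (Iio 0) := by
    simpa using continuousOn_integral_mul_exp_mul (W := fun _ => (1 : ℝ))
      aestronglyMeasurable_const hV hV0 (by simpa using hZ)
  exact (continuousOn_integral_mul_exp_mul hW hV hV0 hint).div hZc
    fun α hα => (integral_exp_mul_pos (hZ α hα)).ne'

section Monotonicity

variable [SFinite μ] {V : X → ℝ} {α α' : ℝ}
  (hZ : Integrable (fun x => exp (α * V x)) μ) (hZ' : Integrable (fun x => exp (α' * V x)) μ)
include hZ hZ'

theorem gibbsMean_le_gibbsMean_of_monovary [NeZero μ] (hWV : Monovary W V) (hα : α ≤ α')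
    (hW : Integrable (fun x => W x * exp (α * V x)) μ)
    (hW' : Integrable (fun x => W x * exp (α' * V x)) μ) :
    gibbsMean μ W V α ≤ gibbsMean μ W V α' := by
  have h := integral_nonneg (E := ℝ) (μ := μ.prod μ)
    fun p => chebyshevKernel_exp_mul_nonneg hWV hα p
  rw [integral_chebyshevKernel hZ' hZ hW' hW] at h
  rw [gibbsMean, gibbsMean, div_le_div_iff₀ (integral_exp_mul_pos hZ) (integral_exp_mul_pos hZ')]
  linarith

theorem gibbsMean_self_lt_gibbsMean_self {s t : Set X} (hs : μ s ≠ 0) (ht : μ t ≠ 0)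
    (hst : ∀ x ∈ s, ∀ y ∈ t, V y < V x) (hα : α < α')
    (hV : Integrable (fun x => V x * exp (α * V x)) μ)
    (hV' : Integrable (fun x => V x * exp (α' * V x)) μ) :
    gibbsMean μ V V α < gibbsMean μ V V α' := by
  have : NeZero μ := ⟨by rintro rfl; exact hs rfl⟩
  have h : 0 < ∫ p, chebyshevKernel V (fun x => exp (α' * V x)) (fun x => exp (α * V x)) p
      ∂μ.prod μ := by
    rw [integral_pos_iff_support_of_nonneg (chebyshevKernel_exp_mul_nonneg (monovary_self V) hα.le)
      (integrable_chebyshevKernel hZ' hZ hV' hV)]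
    refine (pos_iff_ne_zero.2 ?_).trans_le (measure_mono (s := s ×ˢ t) ?_)
    · rw [Measure.prod_prod]; exact mul_ne_zero hs ht
    · rintro ⟨x, y⟩ ⟨hx, hy⟩
      exact (chebyshevKernel_exp_mul_pos hα (hst x hx y hy)).ne'
  rw [integral_chebyshevKernel hZ' hZ hV' hV] at h
  rw [gibbsMean, gibbsMean, div_lt_div_iff₀ (integral_exp_mul_pos hZ) (integral_exp_mul_pos hZ')]
  linarith

end Monotonicity

end Correlation

namespace IsOrlicz

variable {V : ℝ → ℝ} (hV : IsOrlicz V)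
include hV

theorem nonneg (x : ℝ) : 0 ≤ V x := hV.2.2.2.2 x

theorem pos {x : ℝ} (hx : x ≠ 0) : 0 < V x := hV.2.2.2.1 x hx

protected theorem continuous : Continuous V :=
  continuousOn_univ.1 (hV.1.continuousOn isOpen_univ)

theorem apply_abs (x : ℝ) : V |x| = V x := by
  rcases abs_choice x with h | h <;> rw [h]
  exact hV.2.1 x

theorem le_div_mul {s t : ℝ} (hs : 0 ≤ s) (hst : s ≤ t) : V s ≤ s / t * V t := by
  rcases (hs.trans hst).eq_or_lt with rfl | ht
  · rw [le_antisymm hst hs, hV.2.2.1, mul_zero]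
  have h := hV.1.2 (mem_univ 0) (mem_univ t) (sub_nonneg.2 (div_le_one_of_le₀ hst ht.le))
    (div_nonneg hs ht.le) (sub_add_cancel 1 (s / t))
  simpa [hV.2.2.1, div_mul_cancel₀ s ht.ne'] using h

theorem le_of_abs_le {x y : ℝ} (h : |x| ≤ |y|) : V x ≤ V y := by
  rw [← hV.apply_abs x, ← hV.apply_abs y]
  exact (hV.le_div_mul (abs_nonneg x) h).trans
    (mul_le_of_le_one_left (hV.nonneg _) (div_le_one_of_le₀ h (abs_nonneg y)))

theorem lt_of_nonneg_of_lt {s t : ℝ} (hs : 0 ≤ s) (hst : s < t) : V s < V t := by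
  have ht : 0 < t := hs.trans_lt hst
  exact (hV.le_div_mul hs hst.le).trans_lt
    (mul_lt_of_lt_one_left (hV.pos ht.ne') ((div_lt_one ht).2 hst))

theorem tendsto_atTop : Tendsto V atTop atTop := by
  refine tendsto_atTop_mono' _ ?_ ((tendsto_id.const_mul_atTop (hV.pos one_ne_zero)))
  filter_upwards [eventually_ge_atTop 1] with x hx
  have h := hV.le_div_mul zero_le_one hx
  rwa [div_mul_eq_mul_div, one_mul, le_div_iff₀ (zero_lt_one.trans_le hx)] at h

end IsOrlicz

theorem IsOrlicz.monovary {V₁ V₂ : ℝ → ℝ} (hV₁ : IsOrlicz V₁) (hV₂ : IsOrlicz V₂) :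
    Monovary V₁ V₂ := fun _ _ h =>
  hV₁.le_of_abs_le (not_le.1 fun hyx => h.not_ge (hV₂.le_of_abs_le hyx)).le

theorem mul_exp_mul_le_neg_two_div {u β : ℝ} (hβ : β < 0) :
    u * exp (β * u) ≤ -2 / β * exp (β / 2 * u) := by
  have h := add_one_le_exp (-(β / 2) * u)
  have e₁ : exp (β * u) = exp (β / 2 * u) * exp (β / 2 * u) := by rw [← exp_add]; ring_nf
  have e₂ : exp (-(β / 2) * u) * exp (β / 2 * u) = 1 := by
    rw [← exp_add, neg_mul, neg_add_cancel, exp_zero]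
  have hE := exp_pos (β / 2 * u)
  have h' : u * exp (β / 2 * u) ≤ -2 / β := by rw [le_div_iff_of_neg hβ]; nlinarith
  calc u * exp (β * u) = u * exp (β / 2 * u) * exp (β / 2 * u) := by rw [e₁, mul_assoc]
    _ ≤ -2 / β * exp (β / 2 * u) := mul_le_mul_of_nonneg_right h' hE.le

theorem IsOrlicz.integrable_mul_exp_mul {V : ℝ → ℝ} (hV : IsOrlicz V) {β : ℝ} (hβ : β < 0)
    (h : Integrable (fun x => exp (β / 2 * V x))) :
    Integrable (fun x => V x * exp (β * V x)) := by
  have hc := hV.continuous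
  refine (h.const_mul (-2 / β)).mono' (by fun_prop : Continuous _).aestronglyMeasurable
    (Eventually.of_forall fun x => ?_)
  rw [norm_of_nonneg (mul_nonneg (hV.nonneg x) (exp_pos _).le)]
  exact mul_exp_mul_le_neg_two_div hβ

theorem IsOrlicz.two_mul_mul_exp_le_integral {V : ℝ → ℝ} (hV : IsOrlicz V) {β r : ℝ}
    (hβ : β ≤ 0) (hr : 0 ≤ r) (hZ : Integrable (fun x => exp (β * V x))) :
    2 * r * exp (β * V r) ≤ ∫ x, exp (β * V x) :=
  calc 2 * r * exp (β * V r) = ∫ _ in Icc (-r) r, exp (β * V r) := by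
        rw [setIntegral_const, Real.volume_real_Icc_of_le (by linarith), smul_eq_mul]; ring
    _ ≤ ∫ x in Icc (-r) r, exp (β * V x) :=
        setIntegral_mono_on (integrableOn_const measure_Icc_lt_top.ne) hZ.integrableOn
          measurableSet_Icc fun x hx => exp_le_exp.2 (mul_le_mul_of_nonpos_left
            (hV.le_of_abs_le (by rw [abs_of_nonneg hr]; exact abs_le.2 hx)) hβ)
    _ ≤ ∫ x, exp (β * V x) :=
        setIntegral_le_integral hZ (Eventually.of_forall fun x => (exp_pos _).le)

theorem integrable_indicator_Icc_one (T : ℝ) : Integrable ((Icc (-T) T).indicator (1 : ℝ → ℝ)) :=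
  (integrableOn_const measure_Icc_lt_top.ne).integrable_indicator measurableSet_Icc

section TwoOrliczFunctions

variable {V₁ V₂ : ℝ → ℝ} (hV₁ : IsOrlicz V₁) (hV₂ : IsOrlicz V₂)
include hV₁ hV₂

theorem mul_exp_mul_le_add_indicator {β T : ℝ} (hβ : β ≤ 0) (hT : 0 ≤ T) (x : ℝ) :
    V₁ T * exp (β * V₂ x) ≤ V₁ x * exp (β * V₂ x) + V₁ T * (Icc (-T) T).indicator 1 x := by
  by_cases hx : x ∈ Icc (-T) T
  · have he : exp (β * V₂ x) ≤ 1 :=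
      exp_le_one_iff.2 (mul_nonpos_of_nonpos_of_nonneg hβ (hV₂.nonneg x))
    rw [indicator_of_mem hx, Pi.one_apply, mul_one]
    nlinarith [hV₁.nonneg x, hV₁.nonneg T, exp_pos (β * V₂ x)]
  · have hTx : |T| ≤ |x| := by
      rw [abs_of_nonneg hT]; exact (not_le.1 fun h => hx (abs_le.1 h)).le
    rw [indicator_of_notMem hx, mul_zero, add_zero]
    exact mul_le_mul_of_nonneg_right (hV₁.le_of_abs_le hTx) (exp_pos _).le

theorem integrable_exp_mul {β : ℝ} (hβ : β ≤ 0)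
    (h : Integrable (fun x => V₁ x * exp (β * V₂ x))) : Integrable (fun x => exp (β * V₂ x)) := by
  have h₁ : 0 < V₁ 1 := hV₁.pos one_ne_zero
  refine ((h.add ((integrable_indicator_Icc_one 1).const_mul (V₁ 1))).const_mul (V₁ 1)⁻¹).mono'
    (hV₂.continuous.measurable.const_mul β).exp.aestronglyMeasurable
    (Eventually.of_forall fun x => ?_)
  rw [norm_of_nonneg (exp_pos _).le, inv_mul_eq_div, le_div_iff₀ h₁, mul_comm]
  exact mul_exp_mul_le_add_indicator hV₁ hV₂ hβ zero_le_one x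

theorem mul_integral_exp_mul_le {β T : ℝ} (hβ : β ≤ 0) (hT : 0 ≤ T)
    (hW : Integrable (fun x => V₁ x * exp (β * V₂ x)))
    (hZ : Integrable (fun x => exp (β * V₂ x))) :
    V₁ T * ∫ x, exp (β * V₂ x) ≤ (∫ x, V₁ x * exp (β * V₂ x)) + 2 * T * V₁ T := by
  have hind := (integrable_indicator_Icc_one T).const_mul (V₁ T)
  calc V₁ T * ∫ x, exp (β * V₂ x) = ∫ x, V₁ T * exp (β * V₂ x) := (integral_const_mul _ _).symm
    _ ≤ ∫ x, (V₁ x * exp (β * V₂ x) + V₁ T * (Icc (-T) T).indicator 1 x) :=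
        integral_mono (hZ.const_mul _) (hW.add hind) (mul_exp_mul_le_add_indicator hV₁ hV₂ hβ hT)
    _ = (∫ x, V₁ x * exp (β * V₂ x)) + 2 * T * V₁ T := by
        rw [integral_add hW hind, integral_const_mul, integral_indicator_one measurableSet_Icc,
          Real.volume_real_Icc_of_le (by linarith)]
        ring

theorem mul_exp_mul_le_of_abs_lt {δ m a : ℝ} (hδ : 0 ≤ δ) (hm : 0 ≤ m)
    (hsmall : ∀ x, |x| < δ → V₁ x ≤ m) (ha : a ≤ -1) (x : ℝ) :
    V₁ x * exp (a * V₂ x) ≤ m * exp (a * V₂ x) + exp ((a + 1) * V₂ δ) * (V₁ x * exp (-V₂ x)) := by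
  have hfar : 0 ≤ exp ((a + 1) * V₂ δ) * (V₁ x * exp (-V₂ x)) :=
    mul_nonneg (exp_pos _).le (mul_nonneg (hV₁.nonneg x) (exp_pos _).le)
  rcases lt_or_ge |x| δ with hx | hx
  · exact le_add_of_le_of_nonneg (mul_le_mul_of_nonneg_right (hsmall x hx) (exp_pos _).le) hfar
  · have hδx : V₂ δ ≤ V₂ x := hV₂.le_of_abs_le (by rwa [abs_of_nonneg hδ])
    have he : exp (a * V₂ x) ≤ exp ((a + 1) * V₂ δ) * exp (-V₂ x) := by
      rw [← exp_add, exp_le_exp]; nlinarith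
    calc V₁ x * exp (a * V₂ x) ≤ V₁ x * (exp ((a + 1) * V₂ δ) * exp (-V₂ x)) :=
          mul_le_mul_of_nonneg_left he (hV₁.nonneg x)
      _ = exp ((a + 1) * V₂ δ) * (V₁ x * exp (-V₂ x)) := by ring
      _ ≤ _ := le_add_of_nonneg_left (mul_nonneg hm (exp_pos _).le)

variable (hint : ∀ α : ℝ, α < 0 → Integrable (fun x : ℝ => V₁ x * exp (α * V₂ x)))
include hint

/-- Far from the origin `V₁ ≥ 2`, and for `b` close to `0` the Gibbs measure puts most of its
mass there. -/
theorem exists_one_le_gibbsMean : ∃ b < 0, 1 ≤ gibbsMean volume V₁ V₂ b := by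
  obtain ⟨T, hT2, hT0⟩ :=
    ((hV₁.tendsto_atTop.eventually_ge_atTop 2).and (eventually_ge_atTop 0)).exists
  have hr : 0 < V₂ (4 * T + 1) := hV₂.pos (by positivity)
  set b := -Real.log 2 / V₂ (4 * T + 1)
  have hb : b < 0 := div_neg_of_neg_of_pos (neg_neg_of_pos (log_pos one_lt_two)) hr
  have hZ := integrable_exp_mul hV₁ hV₂ hb.le (hint b hb)
  have hZr := hV₂.two_mul_mul_exp_le_integral hb.le (by positivity : (0 : ℝ) ≤ 4 * T + 1) hZ
  rw [div_mul_cancel₀ _ hr.ne', exp_neg, exp_log two_pos] at hZr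
  have hmain := mul_integral_exp_mul_le hV₁ hV₂ hb.le hT0 (hint b hb) hZ
  refine ⟨b, hb, ?_⟩
  rw [gibbsMean, one_le_div (integral_exp_mul_pos hZ)]
  nlinarith

/-- As `a → -∞` the Gibbs measure concentrates near `0`, where `V₁ ≤ 1/2`: the mass outside
`[-δ, δ]` is `O(exp (a * V₂ δ))`, while the mass of `[-δ/2, δ/2]` is at least
`δ * exp (a * V₂ (δ / 2))`. -/
theorem eventually_gibbsMean_le_one : ∀ᶠ a in atBot, gibbsMean volume V₁ V₂ a ≤ 1 := by
  obtain ⟨δ, hδ, hsmall⟩ : ∃ δ > 0, ∀ x : ℝ, |x| < δ → V₁ x ≤ 1 / 2 := by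
    have h := (hV₁.continuous.tendsto 0).eventually
      (Iic_mem_nhds (by rw [hV₁.2.2.1]; norm_num : V₁ 0 < 1 / 2))
    simpa [Metric.eventually_nhds_iff, Real.dist_eq] using h
  have hK : Integrable (fun x => V₁ x * exp (-V₂ x)) := by simpa using hint (-1) (by norm_num)
  set K := ∫ x, V₁ x * exp (-V₂ x)
  have hc : V₂ (δ / 2) < V₂ δ := hV₂.lt_of_nonneg_of_lt (by positivity) (by linarith)
  have htend : Tendsto (fun a => exp (a * (V₂ δ - V₂ (δ / 2))) * (exp (V₂ δ) * K)) atBot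
      (𝓝 0) := by
    simpa using (tendsto_exp_atBot.comp
      (tendsto_id.atBot_mul_const (sub_pos.2 hc))).mul_const (exp (V₂ δ) * K)
  filter_upwards [htend.eventually_lt_const (half_pos hδ), eventually_le_atBot (-1)]
    with a hQ ha
  have ha0 : a < 0 := by linarith
  have hZ := integrable_exp_mul hV₁ hV₂ ha0.le (hint a ha0)
  have hN : ∫ x, V₁ x * exp (a * V₂ x) ≤
      1 / 2 * (∫ x, exp (a * V₂ x)) + exp ((a + 1) * V₂ δ) * K := by
    calc ∫ x, V₁ x * exp (a * V₂ x)
        ≤ ∫ x, (1 / 2 * exp (a * V₂ x) + exp ((a + 1) * V₂ δ) * (V₁ x * exp (-V₂ x))) :=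
          integral_mono (hint a ha0) ((hZ.const_mul _).add (hK.const_mul _))
            (mul_exp_mul_le_of_abs_lt hV₁ hV₂ hδ.le (by norm_num) hsmall ha)
      _ = _ := by
          rw [integral_add (hZ.const_mul _) (hK.const_mul _), integral_const_mul,
            integral_const_mul]
  have hZδ := hV₂.two_mul_mul_exp_le_integral ha0.le (half_pos hδ).le hZ
  have hfar : exp ((a + 1) * V₂ δ) * K ≤ δ / 2 * exp (a * V₂ (δ / 2)) :=
    calc exp ((a + 1) * V₂ δ) * K
        = exp (a * (V₂ δ - V₂ (δ / 2))) * (exp (V₂ δ) * K) * exp (a * V₂ (δ / 2)) := by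
          rw [show (a + 1) * V₂ δ = a * (V₂ δ - V₂ (δ / 2)) + V₂ δ + a * V₂ (δ / 2) by ring,
            exp_add, exp_add]
          ring
      _ ≤ δ / 2 * exp (a * V₂ (δ / 2)) := mul_le_mul_of_nonneg_right hQ.le (exp_pos _).le
  rw [gibbsMean, div_le_one (integral_exp_mul_pos hZ)]
  linarith

theorem continuousOn_gibbsMean_of_isOrlicz : ContinuousOn (gibbsMean volume V₁ V₂) (Iio 0) :=
  continuousOn_gibbsMean hV₁.continuous.aestronglyMeasurable hV₂.continuous.measurable hV₂.nonneg
    (fun β hβ => integrable_exp_mul hV₁ hV₂ hβ.le (hint β hβ)) hint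

theorem exists_gibbsMean_eq_one : ∃ c < 0, gibbsMean volume V₁ V₂ c = 1 := by
  obtain ⟨b, hb, hb1⟩ := exists_one_le_gibbsMean hV₁ hV₂ hint
  obtain ⟨a, ha1, hab⟩ :=
    ((eventually_gibbsMean_le_one hV₁ hV₂ hint).and (eventually_le_atBot b)).exists
  obtain ⟨c, hc, hc1⟩ := intermediate_value_Icc hab
    ((continuousOn_gibbsMean_of_isOrlicz hV₁ hV₂ hint).mono fun x hx => hx.2.trans_lt hb)
    ⟨ha1, hb1⟩
  exact ⟨c, hc.2.trans_lt hb, hc1⟩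

theorem monotoneOn_gibbsMean : MonotoneOn (gibbsMean volume V₁ V₂) (Iio 0) :=
  fun α hα α' hα' h => gibbsMean_le_gibbsMean_of_monovary
    (integrable_exp_mul hV₁ hV₂ (le_of_lt hα) (hint α hα))
    (integrable_exp_mul hV₁ hV₂ (le_of_lt hα') (hint α' hα'))
    (hV₁.monovary hV₂) h (hint α hα) (hint α' hα')

end TwoOrliczFunctions

theorem IsOrlicz.strictMonoOn_gibbsMean_self {V : ℝ → ℝ} (hV : IsOrlicz V)
    (hZ : ∀ β : ℝ, β < 0 → Integrable (fun x => exp (β * V x))) :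
    StrictMonoOn (gibbsMean volume V V) (Iio 0) := fun α hα α' hα' h =>
  gibbsMean_self_lt_gibbsMean_self (s := Ioo 1 2) (t := Ioo 0 1) (hZ α hα) (hZ α' hα')
    (by simp) (by simp) (fun _ hx _ hy => hV.lt_of_nonneg_of_lt hy.1.le (hy.2.trans hx.1)) h
    (hV.integrable_mul_exp_mul hα (hZ _ (by linarith [mem_Iio.1 hα])))
    (hV.integrable_mul_exp_mul hα' (hZ _ (by linarith [mem_Iio.1 hα'])))

theorem stmt15_general (V₁ V₂ : ℝ → ℝ) (hV₁ : IsOrlicz V₁) (hV₂ : IsOrlicz V₂)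
    (hint : ∀ α : ℝ, α < 0 → Integrable (fun x : ℝ => V₁ x * Real.exp (α * V₂ x)))
    (alph : ℝ → ℝ)
    (halph : ∀ R : ℝ, 0 < R → alph R < 0 ∧
      (∫ x : ℝ, V₂ x * Real.exp (alph R * V₂ x))
        = R * ∫ x : ℝ, Real.exp (alph R * V₂ x)) :
    ∃ Rb : ℝ, 0 < Rb ∧
      (∫ x : ℝ, V₁ x * Real.exp (alph Rb * V₂ x))
        = 1 * ∫ x : ℝ, Real.exp (alph Rb * V₂ x) ∧
      ∀ R : ℝ, 0 < R → R ≤ Rb →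
        (∫ x : ℝ, V₁ x * Real.exp (alph R * V₂ x))
          ≤ 1 * ∫ x : ℝ, Real.exp (alph R * V₂ x) := by
  have hZ : ∀ β : ℝ, β < 0 → Integrable (fun x => exp (β * V₂ x)) :=
    fun β hβ => integrable_exp_mul hV₁ hV₂ hβ.le (hint β hβ)
  have hZpos : ∀ β : ℝ, β < 0 → 0 < ∫ x, exp (β * V₂ x) :=
    fun β hβ => integral_exp_mul_pos (hZ β hβ)
  have hmean : ∀ R : ℝ, 0 < R → gibbsMean volume V₂ V₂ (alph R) = R := fun R hR =>
    (div_eq_iff (hZpos _ (halph R hR).1).ne').2 (halph R hR).2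
  have hmono := hV₂.strictMonoOn_gibbsMean_self hZ
  obtain ⟨c, hc, hc1⟩ := exists_gibbsMean_eq_one hV₁ hV₂ hint
  set Rb := gibbsMean volume V₂ V₂ c
  have hRb : 0 < Rb := by
    refine lt_of_le_of_lt ?_ (hmono (mem_Iio.2 (by linarith)) hc (by linarith : c - 1 < c))
    exact div_nonneg (integral_nonneg fun x => mul_nonneg (hV₂.nonneg x) (exp_pos _).le)
      (integral_nonneg fun x => (exp_pos _).le)
  have hαRb : alph Rb = c := hmono.injOn (halph Rb hRb).1 hc (hmean Rb hRb)
  refine ⟨Rb, hRb, ?_, fun R hR hRRb => ?_⟩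
  · rw [hαRb, one_mul, ← div_eq_one_iff_eq (hZpos c hc).ne']
    exact hc1
  · have hαR : alph R ≤ c := (hmono.le_iff_le (halph R hR).1 hc).1 ((hmean R hR).trans_le hRRb)
    rw [one_mul, ← div_le_one (hZpos _ (halph R hR).1)]
    exact (monotoneOn_gibbsMean hV₁ hV₂ hint (halph R hR).1 hc hαR).trans hc1.le

/-- There exists `R̄ > 0` with `m_{V₁}(μ_{V₂,α(R̄)}) = 1` such that for all
`0 < R ≤ R̄`, `m_{V₁}(μ_{V₂,α(R)}) ≤ 1`; here `α(R) < 0` is the unique solution of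
`m_{V₂}(μ_{V₂,α(R)}) = R`. -/
theorem stmt15 (V₁ V₂ : ℝ → ℝ) (hV₁ : IsOrlicz V₁) (hV₂ : IsOrlicz V₂)
    (hgrow : Tendsto (fun x : ℝ => V₁ x / V₂ x) (atTop ⊔ atBot) atTop)
    (hint : ∀ α : ℝ, α < 0 → Integrable (fun x : ℝ => V₁ x * Real.exp (α * V₂ x)))
    (alph : ℝ → ℝ)
    (halph : ∀ R : ℝ, 0 < R → alph R < 0 ∧
      (∫ x : ℝ, V₂ x * Real.exp (alph R * V₂ x))
        = R * ∫ x : ℝ, Real.exp (alph R * V₂ x)) :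
    ∃ Rb : ℝ, 0 < Rb ∧
      (∫ x : ℝ, V₁ x * Real.exp (alph Rb * V₂ x))
        = 1 * ∫ x : ℝ, Real.exp (alph Rb * V₂ x) ∧
      ∀ R : ℝ, 0 < R → R ≤ Rb →
        (∫ x : ℝ, V₁ x * Real.exp (alph R * V₂ x))
          ≤ 1 * ∫ x : ℝ, Real.exp (alph R * V₂ x) :=
  stmt15_general V₁ V₂ hV₁ hV₂ hint alph halph
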